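/- Let k ≥ 1, let V_k ⊊ S*_k be a proper subspace, let x^u be the largest monomial of degree k (with respect to the fixed monomial order) that does not lie in V_k, and suppose i ∈ {0,1,…,n} is such that c_i(x^u) ∉ S_1 ⌟ V_k. Then c_i(x^u) is the largest monomial of degree k−1 that does not lie in S_1 ⌟ V_k. -/

import Mathlib

open MvPolynomial

noncomputable section

/-- The contraction operator `c_i` (apolarity action of the `i`-th dual variable):
`c_i(x^u) = x^{u−e_i}` if `u_i > 0` and `c_i(x^u) = 0` otherwise, extended linearly. -/
def contract {n : ℕ} (i : Fin (n + 1)) (f : MvPolynomial (Fin (n + 1)) ℂ) :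
    MvPolynomial (Fin (n + 1)) ℂ :=
  ∑ u ∈ f.support,
    if u i = 0 then 0 else monomial (u - Finsupp.single i 1) (f.coeff u)

/-- `S_1 ⌟ V`: the span of all contractions `c_i(f)` with `f ∈ V`. -/
def contractSpan {n : ℕ} (V : Submodule ℂ (MvPolynomial (Fin (n + 1)) ℂ)) :
    Submodule ℂ (MvPolynomial (Fin (n + 1)) ℂ) :=
  Submodule.span ℂ {g | ∃ i : Fin (n + 1), ∃ f ∈ V, g = contract i f}

/-!
If `x^v > c_i(x^u) = x^{u - e_i}` then `x^{v + e_i} > x^u` by compatibility of the monomial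
order with multiplication, so `x^{v + e_i} ∈ V_k` by maximality of `x^u`, and hence
`x^v = c_i(x^{v + e_i}) ∈ S_1 ⌟ V_k`.
-/

theorem Finsupp.sum_add_single_one {σ : Type*} [Fintype σ] (v : σ →₀ ℕ) (i : σ) :
    ∑ j, (v + Finsupp.single i 1 : σ →₀ ℕ) j = ∑ j, v j + 1 := by
  simp only [← Finsupp.degree_eq_sum, map_add, Finsupp.degree_single]

section Contraction

variable {n : ℕ}

theorem contract_monomial (i : Fin (n + 1)) (w : Fin (n + 1) →₀ ℕ) :
    contract i (monomial w (1 : ℂ)) =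
      if w i = 0 then 0 else monomial (w - Finsupp.single i 1) 1 := by
  simp [contract, support_monomial, coeff_monomial]

theorem contract_monomial_add_single (i : Fin (n + 1)) (v : Fin (n + 1) →₀ ℕ) :
    contract i (monomial (v + Finsupp.single i 1) (1 : ℂ)) = monomial v 1 := by
  rw [contract_monomial, if_neg (by simp), add_tsub_cancel_right]

theorem contract_mem_contractSpan {V : Submodule ℂ (MvPolynomial (Fin (n + 1)) ℂ)}
    (i : Fin (n + 1)) {f : MvPolynomial (Fin (n + 1)) ℂ} (hf : f ∈ V) :
    contract i f ∈ contractSpan V :=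
  Submodule.subset_span ⟨i, f, hf, rfl⟩

theorem monomial_mem_contractSpan_of_add_single_mem
    {V : Submodule ℂ (MvPolynomial (Fin (n + 1)) ℂ)} {i : Fin (n + 1)} {v : Fin (n + 1) →₀ ℕ}
    (hv : monomial (v + Finsupp.single i 1) (1 : ℂ) ∈ V) :
    monomial v (1 : ℂ) ∈ contractSpan V :=
  contract_monomial_add_single i v ▸ contract_mem_contractSpan i hv

end Contraction

theorem escaping_contraction_is_largest_general (n k : ℕ) (hk : 1 ≤ k)
    (lo : LinearOrder (Fin (n + 1) →₀ ℕ))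
    (hlo : ∀ a b c : Fin (n + 1) →₀ ℕ, lo.lt a b → lo.lt (a + c) (b + c))
    (Vk : Submodule ℂ (MvPolynomial (Fin (n + 1)) ℂ))
    (u : Fin (n + 1) →₀ ℕ) (hu : ∑ j, u j = k)
    (hmax : ∀ v : Fin (n + 1) →₀ ℕ, (∑ j, v j = k) →
      (monomial v 1 : MvPolynomial (Fin (n + 1)) ℂ) ∉ Vk → lo.le v u)
    (i : Fin (n + 1))
    (hi : contract i (monomial u 1) ∉ contractSpan Vk) :
    contract i (monomial u 1) =
        (monomial (u - Finsupp.single i 1) 1 : MvPolynomial (Fin (n + 1)) ℂ) ∧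
      (∑ j, (u - Finsupp.single i 1 : Fin (n + 1) →₀ ℕ) j = k - 1) ∧
      ∀ v : Fin (n + 1) →₀ ℕ, (∑ j, v j = k - 1) →
        (monomial v 1 : MvPolynomial (Fin (n + 1)) ℂ) ∉ contractSpan Vk →
        lo.le v (u - Finsupp.single i 1) := by
  let := lo
  have hui : u i ≠ 0 := fun h ↦ hi (by rw [contract_monomial, if_pos h]; exact zero_mem _)
  have hu_eq : u - Finsupp.single i 1 + Finsupp.single i 1 = u :=
    tsub_add_cancel_of_le (Finsupp.single_le_iff.2 (Nat.one_le_iff_ne_zero.2 hui))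
  refine ⟨by rw [contract_monomial, if_neg hui], ?_, fun v hv hvV ↦ ?_⟩
  · have hsum := Finsupp.sum_add_single_one (u - Finsupp.single i 1) i
    rw [hu_eq, hu] at hsum
    omega
  refine le_of_not_gt fun hlt ↦ hvV (monomial_mem_contractSpan_of_add_single_mem (i := i) ?_)
  have hlt' : lo.lt u (v + Finsupp.single i 1) := hu_eq ▸ hlo _ _ _ hlt
  by_contra hnotin
  have hdeg : ∑ j, (v + Finsupp.single i 1 : Fin (n + 1) →₀ ℕ) j = k := by
    rw [Finsupp.sum_add_single_one, hv]
    omega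
  exact ((lo.lt_iff_le_not_ge _ _).1 hlt').2 (hmax _ hdeg hnotin)

/-- If `x^u` is the largest degree-`k` monomial not in a proper subspace `V_k ⊊ S*_k` and
`c_i(x^u) ∉ S_1 ⌟ V_k`, then `c_i(x^u)` is the largest degree-`(k−1)` monomial not in
`S_1 ⌟ V_k`. -/
theorem escaping_contraction_is_largest (n k : ℕ) (hn : 1 ≤ n) (hk : 1 ≤ k)
    (lo : LinearOrder (Fin (n + 1) →₀ ℕ))
    (hlo : ∀ a b c : Fin (n + 1) →₀ ℕ, lo.lt a b → lo.lt (a + c) (b + c))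
    (Vk : Submodule ℂ (MvPolynomial (Fin (n + 1)) ℂ))
    (hVk : Vk ≤ homogeneousSubmodule (Fin (n + 1)) ℂ k)
    (hproper : Vk ≠ homogeneousSubmodule (Fin (n + 1)) ℂ k)
    (u : Fin (n + 1) →₀ ℕ) (hu : ∑ j, u j = k)
    (humem : (monomial u 1 : MvPolynomial (Fin (n + 1)) ℂ) ∉ Vk)
    (hmax : ∀ v : Fin (n + 1) →₀ ℕ, (∑ j, v j = k) →
      (monomial v 1 : MvPolynomial (Fin (n + 1)) ℂ) ∉ Vk → lo.le v u)
    (i : Fin (n + 1))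
    (hi : contract i (monomial u 1) ∉ contractSpan Vk) :
    contract i (monomial u 1) =
        (monomial (u - Finsupp.single i 1) 1 : MvPolynomial (Fin (n + 1)) ℂ) ∧
      (∑ j, (u - Finsupp.single i 1 : Fin (n + 1) →₀ ℕ) j = k - 1) ∧
      ∀ v : Fin (n + 1) →₀ ℕ, (∑ j, v j = k - 1) →
        (monomial v 1 : MvPolynomial (Fin (n + 1)) ℂ) ∉ contractSpan Vk →
        lo.le v (u - Finsupp.single i 1) :=
  escaping_contraction_is_largest_general n k hk lo hlo Vk u hu hmax i hi
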